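/- The chromatic polynomial evaluated at negative arguments alternates in sign: for a graph H on n vertices and any integer q ≥ 1, (−1)^n χ_H(−q) > 0. -/

import Mathlib

/-!
Deletion–contraction: for an edge `ab` of `H`, the proper colourings of `H - ab` split according
to whether `a` and `b` get different colours (proper colourings of `H`) or the same colour
(proper colourings of `H / ab`), so `χ_H = χ_{H - ab} - χ_{H / ab}` as polynomials. Since `H / ab`
has one vertex less, `(-1)^n χ_H(-q) = (-1)^n χ_{H - ab}(-q) + (-1)^(n-1) χ_{H / ab}(-q)`, and
induction on the number of vertices and then on the edge set reduces positivity to edgeless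
graphs, where `(-1)^n (-q)^n = q^n > 0`. An integer polynomial is determined by its values on `ℕ`,
so the given `P` is the polynomial produced by this recursion.
-/

open SimpleGraph Polynomial Finset

/-- Number of proper colorings of `H` with `q` colors (the value of the chromatic
polynomial of `H` at `q`). -/
noncomputable def chromatic {V : Type*} [Fintype V] (H : SimpleGraph V) (q : ℕ) : ℕ :=
  Nat.card {f : V → Fin q // ∀ ⦃v w⦄, H.Adj v w → f v ≠ f w}

/-- Contraction of the edge `{a, b}` of `H`: the vertex `b` is identified with `a`
(loops and multiple edges arising from the identification are discarded). -/
def SimpleGraph.contract {V : Type*} (H : SimpleGraph V) (a b : V) :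
    SimpleGraph {v : V // v ≠ b} :=
  SimpleGraph.fromRel (fun x y =>
    H.Adj x.1 y.1 ∨ (x.1 = a ∧ H.Adj b y.1) ∨ (y.1 = a ∧ H.Adj x.1 b))

namespace SimpleGraph

variable {V α : Type*} {H : SimpleGraph V} {a b : V}

def IsProperColoring (H : SimpleGraph V) (f : V → α) : Prop :=
  ∀ ⦃v w⦄, H.Adj v w → f v ≠ f w

theorem deleteEdges_lt_of_adj (hab : H.Adj a b) : H.deleteEdges {s(a, b)} < H :=
  lt_of_le_of_ne (deleteEdges_le _) fun h =>
    Set.disjoint_singleton_right.mp (deleteEdges_eq_self.mp h) hab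

theorem isProperColoring_deleteEdges_and_ne_iff (hab : H.Adj a b) (f : V → α) :
    (H.deleteEdges {s(a, b)}).IsProperColoring f ∧ f b ≠ f a ↔ H.IsProperColoring f := by
  refine ⟨fun ⟨hf, hfab⟩ v w hvw => ?_, fun hf => ⟨fun v w hvw => hf hvw.1, hf hab.symm⟩⟩
  by_cases hs : s(v, w) = s(a, b)
  · rcases Sym2.eq_iff.mp hs with ⟨rfl, rfl⟩ | ⟨rfl, rfl⟩
    exacts [hfab.symm, hfab]
  · exact hf (deleteEdges_adj.mpr ⟨hvw, hs⟩)

theorem isProperColoring_deleteEdges_iff_contract (hab : a ≠ b) {f : V → α} (hf : f b = f a) :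
    (H.deleteEdges {s(a, b)}).IsProperColoring f ↔
      (H.contract a b).IsProperColoring (f ∘ Subtype.val) := by
  constructor
  · intro hG x y hxy
    rw [contract, fromRel_adj] at hxy
    have key : ∀ x y : {v // v ≠ b}, x ≠ y →
        (H.Adj x y ∨ (x.1 = a ∧ H.Adj b y) ∨ (y.1 = a ∧ H.Adj x b)) → f x ≠ f y := by
      rintro x y hne (h | ⟨hx, h⟩ | ⟨hy, h⟩)
      · exact hG (deleteEdges_adj.mpr ⟨h, by simp [x.2, y.2]⟩)
      · have hy : y.1 ≠ a := fun hy => hne (Subtype.ext (hx.trans hy.symm))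
        rw [hx, ← hf]
        exact hG (deleteEdges_adj.mpr ⟨h, by simp [hab.symm, hy]⟩)
      · have hx : x.1 ≠ a := fun hx => hne (Subtype.ext (hx.trans hy.symm))
        rw [hy, ← hf]
        exact hG (deleteEdges_adj.mpr ⟨h, by simp [hab.symm, hx]⟩)
    obtain ⟨hne, h | h⟩ := hxy
    exacts [key x y hne h, (key y x (Ne.symm hne) h).symm]
  · intro hC
    have key : ∀ v w, (H.deleteEdges {s(a, b)}).Adj v w → w ≠ b → f v ≠ f w := by
      intro v w hvw hw
      by_cases hv : v = b
      · subst hv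
        have hwa : w ≠ a := by rintro rfl; simp at hvw
        have : (H.contract a v).Adj ⟨a, hab⟩ ⟨w, hw⟩ := by
          rw [contract, fromRel_adj]
          exact ⟨by simpa using hwa.symm, Or.inl (Or.inr (Or.inl ⟨rfl, hvw.1⟩))⟩
        rw [hf]
        exact hC this
      · have : (H.contract a b).Adj ⟨v, hv⟩ ⟨w, hw⟩ := by
          rw [contract, fromRel_adj]
          exact ⟨by simpa using hvw.1.ne, Or.inl (Or.inl hvw.1)⟩
        exact hC this
    intro v w hvw
    by_cases hw : w = b
    · exact (key w v hvw.symm (by rintro rfl; exact hvw.ne hw.symm)).symm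
    · exact key v w hvw hw

def eqAtEquivFunNe [DecidableEq V] (hab : a ≠ b) :
    {f : V → α // f b = f a} ≃ ({v // v ≠ b} → α) where
  toFun f := f.1 ∘ Subtype.val
  invFun g := ⟨fun v => if h : v = b then g ⟨a, hab⟩ else g ⟨v, h⟩, by simp [hab]⟩
  left_inv f := by
    ext v
    by_cases hv : v = b <;> simp [hv, f.2]
  right_inv g := by
    ext x
    simp [x.2]

end SimpleGraph

theorem Nat.card_subtype_eq_card_and_add_card_and_not {α : Type*} [Finite α] (p q : α → Prop) :
    Nat.card {x // p x} = Nat.card {x // p x ∧ q x} + Nat.card {x // p x ∧ ¬q x} := by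
  classical
  rw [← Nat.card_sum]
  exact Nat.card_congr ((Equiv.sumCompl fun x : {x // p x} => q x).symm.trans
    (Equiv.sumCongr (Equiv.subtypeSubtypeEquivSubtypeInter p q)
      (Equiv.subtypeSubtypeEquivSubtypeInter p fun x => ¬q x)))

theorem chromatic_eq_card_isProperColoring {V : Type*} [Fintype V] (H : SimpleGraph V) (k : ℕ) :
    chromatic H k = Nat.card {f : V → Fin k // H.IsProperColoring f} := rfl

theorem chromatic_deleteEdges_eq_add_contract {V : Type*} [Fintype V] [DecidableEq V]
    {H : SimpleGraph V} {a b : V} (hab : H.Adj a b) (k : ℕ) :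
    chromatic (H.deleteEdges {s(a, b)}) k = chromatic H k + chromatic (H.contract a b) k := by
  simp only [chromatic_eq_card_isProperColoring]
  rw [Nat.card_subtype_eq_card_and_add_card_and_not _ fun f => f b ≠ f a]
  congr 1
  · exact Nat.card_congr (Equiv.subtypeEquivRight (isProperColoring_deleteEdges_and_ne_iff hab))
  · refine Nat.card_congr ((Equiv.subtypeEquivRight fun f => ?_).trans
      (((Equiv.subtypeSubtypeEquivSubtypeInter (fun f => f b = f a) _).symm).trans
      ((eqAtEquivFunNe hab.ne).subtypeEquiv fun f =>
        isProperColoring_deleteEdges_iff_contract hab.ne f.2)))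
    rw [not_not, and_comm]

theorem chromatic_bot {V : Type*} [Fintype V] (k : ℕ) :
    chromatic (⊥ : SimpleGraph V) k = k ^ Fintype.card V := by
  rw [chromatic_eq_card_isProperColoring,
    Nat.card_congr (Equiv.subtypeUnivEquiv (p := (⊥ : SimpleGraph V).IsProperColoring)
      fun _ _ _ h => h.elim),
    Nat.card_fun, Nat.card_eq_fintype_card, Nat.card_eq_fintype_card, Fintype.card_fin]

theorem Polynomial.eq_of_eval_natCast_eq {R : Type*} [CommRing R] [IsDomain R] [CharZero R]
    {P Q : R[X]} (h : ∀ k : ℕ, P.eval (k : R) = Q.eval (k : R)) : P = Q :=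
  eq_of_infinite_eval_eq P Q <| (Set.infinite_range_of_injective Nat.cast_injective).mono <| by
    rintro _ ⟨k, rfl⟩
    exact h k

namespace SimpleGraph

variable {V : Type*} [Fintype V] {H : SimpleGraph V}

def HasAlternatingChromaticPoly (H : SimpleGraph V) : Prop :=
  ∃ P : ℤ[X], (∀ k : ℕ, P.eval (k : ℤ) = chromatic H k) ∧
    ∀ q : ℤ, 1 ≤ q → 0 < (-1) ^ Fintype.card V * P.eval (-q)

theorem hasAlternatingChromaticPoly_bot : (⊥ : SimpleGraph V).HasAlternatingChromaticPoly := by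
  refine ⟨X ^ Fintype.card V, fun k => by simp [chromatic_bot], fun q hq => ?_⟩
  rw [eval_pow, eval_X, ← mul_pow, neg_one_mul, neg_neg]
  positivity

theorem HasAlternatingChromaticPoly.of_deleteEdges_of_contract [DecidableEq V] {a b : V}
    (hab : H.Adj a b) (hdel : (H.deleteEdges {s(a, b)}).HasAlternatingChromaticPoly)
    (hcon : (H.contract a b).HasAlternatingChromaticPoly) : H.HasAlternatingChromaticPoly := by
  obtain ⟨P, hP, hP_pos⟩ := hdel
  obtain ⟨Q, hQ, hQ_pos⟩ := hcon
  refine ⟨P - Q, fun k => ?_, fun q hq => ?_⟩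
  · rw [eval_sub, hP, hQ, chromatic_deleteEdges_eq_add_contract hab]
    push_cast
    ring
  · have hcard : Fintype.card {v // v ≠ b} + 1 = Fintype.card V := by
      have := Fintype.card_pos_iff.mpr ⟨b⟩
      simp only [Fintype.card_subtype_compl, Fintype.card_unique]
      omega
    calc (0 : ℤ) < (-1) ^ Fintype.card V * P.eval (-q)
          + (-1) ^ Fintype.card {v // v ≠ b} * Q.eval (-q) := add_pos (hP_pos q hq) (hQ_pos q hq)
      _ = (-1) ^ Fintype.card V * (P - Q).eval (-q) := by
        rw [← hcard, eval_sub, pow_succ]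
        ring

theorem hasAlternatingChromaticPoly (H : SimpleGraph V) : H.HasAlternatingChromaticPoly := by
  classical
  induction hn : Fintype.card V using Nat.strong_induction_on generalizing V with
  | _ n ihn =>
  induction H using WellFoundedLT.induction with
  | _ H ihH =>
  obtain rfl | ⟨a, b, hab⟩ := (eq_or_ne H ⊥).imp_right ne_bot_iff_exists_adj.mp
  · exact hasAlternatingChromaticPoly_bot
  · refine .of_deleteEdges_of_contract hab (ihH _ (deleteEdges_lt_of_adj hab)) ?_
    exact ihn _ (hn ▸ Fintype.card_subtype_lt (p := (· ≠ b)) (not_not_intro rfl)) _ rfl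

end SimpleGraph

/-- The chromatic polynomial alternates in sign at negative arguments:
for a graph `H` on `n` vertices and any integer `q ≥ 1`, `(−1)^n χ_H(−q) > 0`. -/
theorem chromatic_alternates {V : Type*} [Fintype V] (H : SimpleGraph V)
    (P : Polynomial ℤ) (hP : ∀ k : ℕ, P.eval (k : ℤ) = chromatic H k)
    (q : ℤ) (hq : 1 ≤ q) :
    0 < (-1) ^ (Fintype.card V) * P.eval (-q) := by
  obtain ⟨P₀, hP₀, hP₀_pos⟩ := H.hasAlternatingChromaticPoly
  rw [Polynomial.eq_of_eval_natCast_eq fun k => (hP k).trans (hP₀ k).symm]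
  exact hP₀_pos q hq
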